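/- For all integers n, w, t with 2 ≤ w ≤ n and 1 ≤ t ≤ n−1, the bias ε₀(n,w,t) satisfies ε₀(n,w,t) = ((−2)^{w−2}/C(n−1,w−1)) · p_{w−1}^{n−1}(t), where p_v^m is the Krawtchouk polynomial of degree v and order m evaluated at the integer t. -/

import Mathlib

open Finset

/-- The bias of statistical decoding on a non-error position. -/
noncomputable def eps0 (n w t : ℕ) : ℝ :=
  (∑ j ∈ Finset.range w,
      if Odd j then (t.choose j * (n - t - 1).choose (w - 1 - j) : ℝ) else 0) /
    ((n - 1).choose (w - 1) : ℝ) - 1 / 2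

/-- Generalized binomial coefficient `C(x, j) = x (x-1) ⋯ (x-j+1) / j!`. -/
noncomputable def genChoose (x : ℝ) (j : ℕ) : ℝ :=
  (∏ k ∈ Finset.range j, (x - k)) / (j.factorial : ℝ)

/-- The Krawtchouk polynomial of degree `v` and order `m`, evaluated at `x`. -/
noncomputable def krawtchouk (m v : ℕ) (x : ℝ) : ℝ :=
  ((-1 : ℝ) ^ v / 2 ^ v) *
    ∑ j ∈ Finset.range (v + 1),
      (-1 : ℝ) ^ j * genChoose x j * genChoose ((m : ℝ) - x) (v - j)

/-!
Among the `C(m, v)` ways to complete a non-error position to a parity check of weight `v + 1`,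
exactly `c j = C(t, j) C(m - t, v - j)` meet the `t` errors in `j` places, so the bias is
`-(1/2) ∑ (-1)^j c j / C(m, v)`: the odd part of the sum is obtained from the total
(Vandermonde) minus the alternating sum. At an integer `t ≤ m` the Krawtchouk polynomial
`p_v^m(t)` is, up to the factor `(-1/2)^v`, precisely this alternating sum.
-/

theorem genChoose_natCast (a j : ℕ) : genChoose a j = a.choose j := by
  rw [genChoose, ← descPochhammer_eval_eq_prod_range, Nat.cast_choose_eq_descPochhammer_div]

theorem sum_range_choose_mul_choose_sub (a b k : ℕ) :
    ∑ j ∈ range (k + 1), a.choose j * b.choose (k - j) = (a + b).choose k := by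
  rw [Nat.add_choose_eq, Nat.sum_antidiagonal_eq_sum_range_succ_mk]

theorem sum_neg_one_pow_mul_eq_sub_two_mul_sum_odd {R : Type*} [CommRing R]
    (s : Finset ℕ) (c : ℕ → R) :
    ∑ j ∈ s, (-1) ^ j * c j = ∑ j ∈ s, c j - 2 * ∑ j ∈ s, if Odd j then c j else 0 := by
  rw [mul_sum, ← sum_sub_distrib]
  refine sum_congr rfl fun j _ => ?_
  rcases j.even_or_odd with hj | hj
  · simp [hj.neg_one_pow, Nat.not_odd_iff_even.mpr hj]
  · simp only [hj.neg_one_pow, if_pos hj]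
    ring

theorem krawtchouk_natCast (m v t : ℕ) (ht : t ≤ m) :
    krawtchouk m v t =
      (-1) ^ v / 2 ^ v *
        ∑ j ∈ range (v + 1), (-1) ^ j * (t.choose j * (m - t).choose (v - j) : ℝ) := by
  simp only [krawtchouk, ← Nat.cast_sub ht, genChoose_natCast, mul_assoc]

theorem eps0_succ_succ (m v t : ℕ) (hv : v ≤ m) (ht : t ≤ m) :
    eps0 (m + 1) (v + 1) t =
      -(∑ j ∈ range (v + 1), (-1) ^ j * (t.choose j * (m - t).choose (v - j) : ℝ)) /
        (2 * m.choose v) := by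
  have hC : (m.choose v : ℝ) ≠ 0 := by exact_mod_cast (Nat.choose_pos hv).ne'
  have htotal : ∑ j ∈ range (v + 1), (t.choose j * (m - t).choose (v - j) : ℝ) = m.choose v := by
    exact_mod_cast (Nat.add_sub_cancel' ht ▸ sum_range_choose_mul_choose_sub t (m - t) v)
  rw [sum_neg_one_pow_mul_eq_sub_two_mul_sum_odd, htotal, eps0,
    show m + 1 - t - 1 = m - t by omega, Nat.add_sub_cancel, Nat.add_sub_cancel]
  field_simp
  ring

theorem eps0_eq_krawtchouk_general (n w t : ℕ) (hw : 2 ≤ w) (hwn : w ≤ n)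
    (htn : t ≤ n - 1) :
    eps0 n w t =
      (((-2 : ℝ) ^ (w - 2)) / ((n - 1).choose (w - 1) : ℝ)) *
        krawtchouk (n - 1) (w - 1) (t : ℝ) := by
  obtain ⟨k, rfl⟩ : ∃ k, w = k + 1 + 1 := ⟨w - 2, by omega⟩
  obtain ⟨m, rfl⟩ : ∃ m, n = m + 1 := ⟨n - 1, by omega⟩
  simp only [Nat.add_sub_cancel] at htn ⊢
  rw [eps0_succ_succ m (k + 1) t (by omega) htn, krawtchouk_natCast m (k + 1) t htn,
    show k + 1 + 1 - 2 = k from rfl]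
  have hsign : (-2 : ℝ) ^ k * ((-1) ^ (k + 1) / 2 ^ (k + 1)) = -1 / 2 := by
    rw [show (-2 : ℝ) = -1 * 2 by norm_num, mul_pow, pow_succ, pow_succ (2 : ℝ)]
    field_simp
    rw [← pow_mul, pow_mul', neg_one_sq, one_pow]
  set S := ∑ j ∈ range (k + 1 + 1), (-1) ^ j * (t.choose j * (m - t).choose (k + 1 - j) : ℝ)
  linear_combination -S / m.choose (k + 1) * hsign

/-- `ε₀(n,w,t) = ((−2)^{w−2}/C(n−1,w−1)) · p_{w−1}^{n−1}(t)`. -/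
theorem eps0_eq_krawtchouk (n w t : ℕ) (hw : 2 ≤ w) (hwn : w ≤ n)
    (ht : 1 ≤ t) (htn : t ≤ n - 1) :
    eps0 n w t =
      (((-2 : ℝ) ^ (w - 2)) / ((n - 1).choose (w - 1) : ℝ)) *
        krawtchouk (n - 1) (w - 1) (t : ℝ) :=
  eps0_eq_krawtchouk_general n w t hw hwn htn
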